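/- For every word w ∈ L_{2,∞} there exists a word w' ∈ L (possibly equal to w) of the same length such that w' is obtained from w by a finite sequence of the rewriting moves: (1) replace a factor ρμ by μρ; (2) replace a prefix w₀ρλw₁λμ (with D_{ρ,λ}(w₀)=1, w₁ ∈ L_{1,∞}) by w₀λρw₁μλ; (3) replace a prefix w₀λρw₁λμ (with D_{ρ,λ}(w₀)=1, w₁ ∈ L_{1,∞}) by w₀ρλw₁μλ. In particular the rewriting process terminates. -/

import Mathlib

inductive Letter | rho | lam | mu
deriving DecidableEq

open Letter

def Dc (a b : Letter) (u : List Letter) : ℤ :=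
  (u.count a : ℤ) - (u.count b : ℤ)

def Linf (k : ℕ) (w : List Letter) : Prop :=
  (∀ u : List Letter, u <+: w → 0 ≤ Dc rho lam u ∧ Dc rho lam u ≤ (k : ℤ) ∧ 0 ≤ Dc lam mu u) ∧
  Dc rho lam w = 0 ∧ Dc lam mu w = 0

def hasRhoMu (w : List Letter) : Prop :=
  ∃ a b : List Letter, w = a ++ [rho, mu] ++ b

def BadPrefix (w : List Letter) : Prop :=
  ∃ w₀ w₁ : List Letter, Dc rho lam w₀ = 1 ∧ Linf 1 w₁ ∧
    ((w₀ ++ [rho, lam] ++ w₁ ++ [lam, mu]) <+: w ∨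
     (w₀ ++ [lam, rho] ++ w₁ ++ [lam, mu]) <+: w)

def Lang (w : List Letter) : Prop :=
  Linf 2 w ∧ ¬ hasRhoMu w ∧ ¬ BadPrefix w

inductive Step : List Letter → List Letter → Prop
  | rhomu (a b : List Letter) :
      Step (a ++ [rho, mu] ++ b) (a ++ [mu, rho] ++ b)
  | move2 (w₀ w₁ rest : List Letter) (h₀ : Dc rho lam w₀ = 1) (h₁ : Linf 1 w₁) :
      Step (w₀ ++ [rho, lam] ++ w₁ ++ [lam, mu] ++ rest)
           (w₀ ++ [lam, rho] ++ w₁ ++ [mu, lam] ++ rest)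
  | move3 (w₀ w₁ rest : List Letter) (h₀ : Dc rho lam w₀ = 1) (h₁ : Linf 1 w₁) :
      Step (w₀ ++ [lam, rho] ++ w₁ ++ [lam, mu] ++ rest)
           (w₀ ++ [rho, lam] ++ w₁ ++ [mu, lam] ++ rest)

/-!
Each move only permutes letters, so the final balances are kept, and the prefixes of the new
word are, up to permutation, prefixes of the old word except for at most two new ones whose
balances are read off directly. Under `θ` every move turns a factor `νμ` into `μν` and leaves
everything before it unchanged, so the `θ`-image read as a binary number (`μ = 0`, `ν = 1`)
strictly decreases; hence the rewriting terminates, and a word admitting no move lies in `L`.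
-/

open Relation

namespace List

variable {α : Type*}

theorem prefix_append_cases {u a b : List α} (h : u <+: a ++ b) :
    u <+: a ∨ ∃ t, u = a ++ t ∧ t <+: b := by
  induction a generalizing u with
  | nil => exact .inr ⟨u, rfl, h⟩
  | cons x a ih =>
    rcases prefix_cons_iff.mp h with rfl | ⟨u, rfl, hu⟩
    · exact .inl nil_prefix
    · rcases ih hu with hu | ⟨t, rfl, ht⟩
      · exact .inl (cons_prefix_cons.mpr ⟨rfl, hu⟩)
      · exact .inr ⟨t, rfl, ht⟩

end List

theorem Dc_perm (a b : Letter) {u v : List Letter} (h : u.Perm v) : Dc a b u = Dc a b v := by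
  simp only [Dc, h.count_eq]

def Ballot (k : ℕ) (u : List Letter) : Prop :=
  0 ≤ Dc rho lam u ∧ Dc rho lam u ≤ (k : ℤ) ∧ 0 ≤ Dc lam mu u

theorem Linf.ballot {k : ℕ} {u w : List Letter} (hw : Linf k w) (hu : u <+: w) : Ballot k u :=
  hw.1 u hu

/-- Every other prefix of the new word is a permutation of a prefix of the old one. -/
theorem Linf.swap {k : ℕ} {p s : List Letter} {x y : Letter} (hw : Linf k (p ++ [x, y] ++ s))
    (hpy : Ballot k (p ++ [y])) : Linf k (p ++ [y, x] ++ s) := by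
  have hperm (t : List Letter) : (p ++ y :: x :: t).Perm (p ++ x :: y :: t) :=
    (List.Perm.swap x y t).append_left p
  refine ⟨fun u hu => ?_, ?_, ?_⟩
  · rw [List.append_assoc] at hu
    rcases List.prefix_append_cases hu with hu | ⟨t₁, rfl, ht₁⟩
    · exact hw.ballot (hu.trans (List.prefix_append_of_prefix (List.prefix_append _ _)))
    rcases List.prefix_cons_iff.mp ht₁ with rfl | ⟨t₂, rfl, ht₂⟩
    · exact hw.ballot (by simp)
    rcases List.prefix_cons_iff.mp ht₂ with rfl | ⟨t, rfl, ht⟩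
    · exact hpy
    have hu := hw.ballot (u := p ++ x :: y :: t) (by simpa using ht)
    rwa [Ballot, ← Dc_perm _ _ (hperm t), ← Dc_perm _ _ (hperm t)] at hu
  · simpa [Dc_perm _ _ (hperm s)] using hw.2.1
  · simpa [Dc_perm _ _ (hperm s)] using hw.2.2

theorem Linf.swap_rho_mu {a b : List Letter} (hw : Linf 2 (a ++ [rho, mu] ++ b)) :
    Linf 2 (a ++ [mu, rho] ++ b) := by
  refine hw.swap ?_
  have ha := hw.ballot (u := a) (by simp)
  have haρμ := hw.ballot (u := a ++ [rho, mu]) (List.prefix_append _ _)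
  simp [Ballot, Dc] at ha haρμ ⊢
  omega

theorem Linf.swap_move {x y : Letter} {w₀ w₁ rest : List Letter}
    (hw : Linf 2 (w₀ ++ [x, y] ++ w₁ ++ [lam, mu] ++ rest))
    (hxy : x = rho ∧ y = lam ∨ x = lam ∧ y = rho) (h₀ : Dc rho lam w₀ = 1)
    (hρ₁ : Dc rho lam w₁ = 0) (hμ₁ : Dc lam mu w₁ = 0) :
    Linf 2 (w₀ ++ [y, x] ++ w₁ ++ [mu, lam] ++ rest) := by
  have hw₀ := hw.ballot (u := w₀) (by simp [List.append_assoc])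
  have hw' : Linf 2 (w₀ ++ [y, x] ++ w₁ ++ [lam, mu] ++ rest) := by
    have hswap := Linf.swap (p := w₀) (s := w₁ ++ [lam, mu] ++ rest) (by simpa using hw) ?_
    · simpa using hswap
    rcases hxy with ⟨rfl, rfl⟩ | ⟨rfl, rfl⟩ <;> simp [Ballot, Dc] at hw₀ h₀ ⊢ <;> omega
  refine hw'.swap ?_
  rcases hxy with ⟨rfl, rfl⟩ | ⟨rfl, rfl⟩ <;> simp [Ballot, Dc] at hw₀ h₀ hρ₁ hμ₁ ⊢ <;> omega

theorem Step.linf_two {w w' : List Letter} (h : Step w w') (hw : Linf 2 w) : Linf 2 w' := by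
  cases h with
  | rhomu => exact hw.swap_rho_mu
  | move2 _ _ _ h₀ h₁ => exact hw.swap_move (.inl ⟨rfl, rfl⟩) h₀ h₁.2.1 h₁.2.2
  | move3 _ _ _ h₀ h₁ => exact hw.swap_move (.inr ⟨rfl, rfl⟩) h₀ h₁.2.1 h₁.2.2

theorem Step.length_eq {w w' : List Letter} (h : Step w w') : w'.length = w.length := by
  cases h <;> simp

theorem Step.length_eq_of_reflTransGen {w w' : List Letter} (h : ReflTransGen Step w w') :
    w'.length = w.length := by
  induction h with
  | refl => rfl
  | tail _ hstep ih => rw [hstep.length_eq, ih]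

/-- `θ w` read as a binary number with `μ = 0` and `ν = 1`, most significant letter first;
on words of equal length, `≺_μ` is `<` on this value. -/
def muValue (w : List Letter) : ℕ :=
  Nat.ofDigits 2 (w.reverse.map fun x => if x = mu then 0 else 1)

theorem muValue_append (u v : List Letter) :
    muValue (u ++ v) = muValue u * 2 ^ v.length + muValue v := by
  simp only [muValue, List.reverse_append, List.map_append, Nat.ofDigits_append,
    List.length_map, List.length_reverse]
  ring

theorem muValue_lt_of_swap {p q s : List Letter} {x y : Letter} (hpq : muValue q = muValue p)
    (hx : x ≠ mu) (hy : y ≠ mu) : muValue (q ++ [mu, y] ++ s) < muValue (p ++ [x, mu] ++ s) := by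
  have hμy : muValue [mu, y] = 1 := by simp [muValue, Nat.ofDigits, hy]
  have hxμ : muValue [x, mu] = 2 := by simp [muValue, Nat.ofDigits, hx]
  simp only [muValue_append, hpq, hμy, hxμ, List.length_cons, List.length_nil]
  have : 0 < 2 ^ s.length := by positivity
  nlinarith

theorem Step.muValue_lt {w w' : List Letter} (h : Step w w') : muValue w' < muValue w := by
  cases h with
  | rhomu => exact muValue_lt_of_swap rfl (by decide) (by decide)
  | move2 | move3 =>
    refine muValue_lt_of_swap ?_ (by decide) (by decide)
    simp [muValue]

theorem Step.wellFounded_flip : WellFounded (flip Step) :=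
  (InvImage.wf muValue wellFounded_lt).mono fun _ _ h => h.muValue_lt

theorem exists_step_of_hasRhoMu_or_badPrefix {w : List Letter} (h : hasRhoMu w ∨ BadPrefix w) :
    ∃ w', Step w w' := by
  rcases h with ⟨a, b, rfl⟩ | ⟨w₀, w₁, h₀, h₁, ⟨rest, rfl⟩ | ⟨rest, rfl⟩⟩
  · exact ⟨_, .rhomu a b⟩
  · exact ⟨_, .move2 w₀ w₁ rest h₀ h₁⟩
  · exact ⟨_, .move3 w₀ w₁ rest h₀ h₁⟩

theorem exists_reflTransGen_step_lang {w : List Letter} (hw : Linf 2 w) :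
    ∃ w', ReflTransGen Step w w' ∧ Lang w' := by
  induction w using Step.wellFounded_flip.induction with
  | _ w ih =>
  by_cases h : hasRhoMu w ∨ BadPrefix w
  · obtain ⟨v, hv⟩ := exists_step_of_hasRhoMu_or_badPrefix h
    obtain ⟨w', hvw', hw'⟩ := ih v hv (hv.linf_two hw)
    exact ⟨w', .head hv hvw', hw'⟩
  · exact ⟨w, .refl, hw, not_or.mp h⟩

theorem stmt14 (w : List Letter) (hw : Linf 2 w) :
    ∃ w' : List Letter, Relation.ReflTransGen Step w w' ∧ Lang w' ∧
      w'.length = w.length := by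
  obtain ⟨w', hww', hw'⟩ := exists_reflTransGen_step_lang hw
  exact ⟨w', hww', hw', Step.length_eq_of_reflTransGen hww'⟩
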